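/- Let m ≥ 4 and let C be an m×n binary 2-covering array such that wt(c^i) ≤ ⌊m/2⌋ for every column c^i of C, and put s = min_{1≤i≤n} wt(c^i). Then for any integer s' with s < s' ≤ ⌊m/2⌋, there exists an m×n binary 2-covering array C' whose columns c'^i satisfy s' ≤ wt(c'^i) ≤ ⌊m/2⌋ and supp(c^i) ⊆ supp(c'^i) for all i = 1,…,n. -/

import Mathlib

/-- An `m × n` matrix over `B_q = {0,…,q-1}` is a `t`-covering array if for any `t`
distinct column indices and any `q`-ary vector of length `t`, some row realizes it. -/
def IsCoveringArray (m n q t : ℕ) (C : Fin m → Fin n → Fin q) : Prop :=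
  ∀ cols : Fin t → Fin n, Function.Injective cols →
    ∀ v : Fin t → Fin q, ∃ r : Fin m, ∀ j : Fin t, C r (cols j) = v j

/-- `CAN t n q` : the minimal size `m` for which a `CA(m; t, n, q)` exists. -/
noncomputable def CAN (t n q : ℕ) : ℕ :=
  sInf { m | ∃ C : Fin m → Fin n → Fin q, IsCoveringArray m n q t C }

/-- The weight of the `i`-th column: the number of nonzero entries. -/
def colWt {m n q : ℕ} (C : Fin m → Fin n → Fin q) (i : Fin n) : ℕ :=
  (Finset.univ.filter fun r : Fin m => (C r i : ℕ) ≠ 0).card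

/-- The support of the `i`-th column: the set of coordinates where it is nonzero. -/
def colSupp {m n q : ℕ} (C : Fin m → Fin n → Fin q) (i : Fin n) : Finset (Fin m) :=
  Finset.univ.filter fun r : Fin m => (C r i : ℕ) ≠ 0

/-- The Hamming distance between the `i`-th and `j`-th columns. -/
def colDist {m n q : ℕ} (C : Fin m → Fin n → Fin q) (i j : Fin n) : ℕ :=
  (Finset.univ.filter fun r : Fin m => C r i ≠ C r j).card

/-- Two arrays are equivalent if one is obtained from the other by a row permutation,
a column permutation, and value permutations applied columnwise. -/
def CAEquiv {m n q : ℕ} (C C' : Fin m → Fin n → Fin q) : Prop :=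
  ∃ (σ : Equiv.Perm (Fin m)) (τ : Equiv.Perm (Fin n)) (f : Fin n → Equiv.Perm (Fin q)),
    ∀ r i, C' r i = f i (C (σ r) (τ i))

/-- The standard maximal binary 2-covering array of size `m` : an
`m × (m-1).choose (m/2 - 1)` binary matrix whose first row is all ones and whose columns,
restricted to the remaining `m - 1` rows, are exactly (i.e. are pairwise distinct) the binary
vectors of length `m-1` with `m/2 - 1` ones. -/
def IsStandardMaxArray (m : ℕ) (S : Fin m → Fin ((m-1).choose (m/2 - 1)) → Fin 2) : Prop :=
  (∀ (r : Fin m) (i), (r : ℕ) = 0 → S r i = 1) ∧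
  (Function.Injective fun i => fun r => S r i) ∧
  (∀ i, (Finset.univ.filter fun r : Fin m => (r : ℕ) ≠ 0 ∧ S r i = 1).card = m/2 - 1)

/-! Over `Fin 2`, a 2-covering array is the same as a family of column supports that are
pairwise incomparable, pairwise intersecting, and pairwise not covering all rows. An antichain
of sets of size at most `⌊m/2⌋` can be raised to sets of size exactly `⌊m/2⌋`, still forming an
antichain: raise the smallest level `a` to level `a + 1` all at once, choosing the extensions
injectively by Hall's theorem, whose condition is the local LYM inequality for the upper shadow
(valid as `2a < m`). The raised supports still intersect pairwise, and two intersecting sets of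
size `⌊m/2⌋` cannot cover all `m` rows. -/

open Finset
open scoped FinsetFamily

namespace Finset
variable {α : Type*} [DecidableEq α] [Fintype α]

theorem card_le_card_upShadow {𝒜 : Finset (Finset α)} {a : ℕ}
    (h𝒜 : (𝒜 : Set (Finset α)).Sized a) (ha : 2 * a < Fintype.card α) : #𝒜 ≤ #(∂⁺ 𝒜) := by
  have hlym := local_lubell_yamamoto_meshalkin_inequality_mul h𝒜.compls
  rw [card_compls, shadow_compls, card_compls,
    show Fintype.card α - (Fintype.card α - a) + 1 = a + 1 by omega] at hlym
  have hle : #(∂⁺ 𝒜) * (a + 1) ≤ #(∂⁺ 𝒜) * (Fintype.card α - a) :=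
    Nat.mul_le_mul_left _ (by omega)
  exact Nat.le_of_mul_le_mul_right (hlym.trans hle) (by omega)

theorem exists_injective_superset_card_add_one {ι : Type*} {S : ι → Finset α} {a : ℕ}
    (hS : Function.Injective S) (hcard : ∀ i, #(S i) = a) (ha : 2 * a < Fintype.card α) :
    ∃ T : ι → Finset α, Function.Injective T ∧ ∀ i, S i ⊆ T i ∧ #(T i) = a + 1 := by
  have hall : ∀ s : Finset ι, #s ≤ #(s.biUnion fun i => ∂⁺ {S i}) := by
    intro s
    have hbiUnion : s.biUnion (fun i => ∂⁺ {S i}) = ∂⁺ (s.image S) := by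
      ext t; simp [mem_upShadow_iff_exists_mem_card_add_one]
    rw [hbiUnion, ← card_image_of_injective s hS]
    refine card_le_card_upShadow (a := a) ?_ ha
    simp [Set.Sized, hcard]
  obtain ⟨T, hT, hTS⟩ := (all_card_le_biUnion_card_iff_exists_injective _).1 hall
  refine ⟨T, hT, fun i => ?_⟩
  obtain ⟨_, hSi, hsub, hTcard⟩ := mem_upShadow_iff_exists_mem_card_add_one.1 (hTS i)
  rw [mem_singleton.1 hSi] at hsub hTcard
  exact ⟨hsub, hTcard.trans (by rw [hcard])⟩

theorem union_ne_univ_of_card_add_le {s t : Finset α} (hst : (s ∩ t).Nonempty)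
    (hcard : #s + #t ≤ Fintype.card α) : s ∪ t ≠ univ := by
  intro hunion
  have hsum := card_union_add_card_inter s t
  rw [hunion, card_univ] at hsum
  have := hst.card_pos
  omega

variable {ι : Type*}

theorem exists_pairwise_not_subset_raise {S : ι → Finset α} {a h : ℕ}
    (hα : 2 * h ≤ Fintype.card α) (hS : Pairwise fun i j => ¬ S i ⊆ S j)
    (ha : ∀ i, a ≤ #(S i)) (hh : ∀ i, #(S i) ≤ h) (hah : a < h) :
    ∃ T : ι → Finset α, (Pairwise fun i j => ¬ T i ⊆ T j) ∧
      ∀ i, S i ⊆ T i ∧ a + 1 ≤ #(T i) ∧ #(T i) ≤ h := by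
  have hSinj : Function.Injective fun i : {i // #(S i) = a} => S i :=
    fun i j hij => by_contra fun hne => hS (Subtype.coe_ne_coe.2 hne) hij.subset
  obtain ⟨U, hU, hSU⟩ := exists_injective_superset_card_add_one hSinj (fun i => i.2) (by omega)
  let T i := if hi : #(S i) = a then U ⟨i, hi⟩ else S i
  have hST : ∀ i, S i ⊆ T i ∧ a + 1 ≤ #(T i) ∧ #(T i) ≤ h := by
    intro i
    by_cases hi : #(S i) = a
    · simp only [T, dif_pos hi, (hSU ⟨i, hi⟩).2]
      exact ⟨(hSU ⟨i, hi⟩).1, le_rfl, by omega⟩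
    · simp only [T, dif_neg hi]
      exact ⟨subset_rfl, by have := ha i; omega, hh i⟩
  refine ⟨T, fun i j hij hsub => ?_, hST⟩
  by_cases hj : #(S j) = a
  -- a raised set has the least possible size `a + 1`
  · have heq : T i = T j := eq_of_subset_of_card_le hsub <| by
      simp only [T, dif_pos hj, (hSU ⟨j, hj⟩).2]; exact (hST i).2.1
    by_cases hi : #(S i) = a
    · simp only [T, dif_pos hi, dif_pos hj] at heq
      exact hij (congrArg Subtype.val (hU heq))
    · simp only [T, dif_neg hi] at heq
      exact hS hij.symm (heq ▸ (hST j).1)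
  · simp only [T, dif_neg hj] at hsub
    exact hS hij ((hST i).1.trans hsub)

theorem exists_pairwise_not_subset_card_eq {S : ι → Finset α} {h : ℕ}
    (hα : 2 * h ≤ Fintype.card α) (hS : Pairwise fun i j => ¬ S i ⊆ S j)
    (hh : ∀ i, #(S i) ≤ h) :
    ∃ T : ι → Finset α, (Pairwise fun i j => ¬ T i ⊆ T j) ∧ ∀ i, S i ⊆ T i ∧ #(T i) = h := by
  suffices key : ∀ d (S : ι → Finset α), (Pairwise fun i j => ¬ S i ⊆ S j) →
      (∀ i, #(S i) ≤ h) → (∀ i, h ≤ #(S i) + d) →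
      ∃ T : ι → Finset α, (Pairwise fun i j => ¬ T i ⊆ T j) ∧ ∀ i, S i ⊆ T i ∧ #(T i) = h from
    key h S hS hh fun i => by omega
  intro d
  induction d with
  | zero => exact fun S hS hh hd => ⟨S, hS, fun i => ⟨subset_rfl, le_antisymm (hh i) (hd i)⟩⟩
  | succ d ih =>
    intro S hS hh hd
    rcases Nat.lt_or_ge d h with hdh | hdh
    · obtain ⟨T, hT, hST⟩ :=
        exists_pairwise_not_subset_raise (a := h - (d + 1)) hα hS (fun i => by have := hd i; omega)
          hh (by omega)
      obtain ⟨U, hU, hTU⟩ := ih T hT (fun i => (hST i).2.2) fun i => by have := (hST i).2.1; omega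
      exact ⟨U, hU, fun i => ⟨(hST i).1.trans (hTU i).1, (hTU i).2⟩⟩
    · exact ih S hS hh fun i => by omega

end Finset

theorem isCoveringArray_two_iff {m n q : ℕ} {C : Fin m → Fin n → Fin q} :
    IsCoveringArray m n q 2 C ↔ Pairwise fun i j => ∀ a b, ∃ r, C r i = a ∧ C r j = b := by
  constructor
  · intro hC i j hij a b
    have hinj : Function.Injective ![i, j] := by
      intro x y; fin_cases x <;> fin_cases y <;> simp [hij, hij.symm]
    obtain ⟨r, hr⟩ := hC ![i, j] hinj ![a, b]
    exact ⟨r, hr 0, hr 1⟩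
  · intro hC cols hcols v
    obtain ⟨r, hr0, hr1⟩ := hC (hcols.ne (by decide : (0 : Fin 2) ≠ 1)) (v 0) (v 1)
    exact ⟨r, Fin.forall_fin_two.2 ⟨hr0, hr1⟩⟩

theorem mem_colSupp_iff {m n : ℕ} {C : Fin m → Fin n → Fin 2} {r : Fin m} {i : Fin n} :
    r ∈ colSupp C i ↔ C r i = 1 := by
  simp only [colSupp, mem_filter, mem_univ, true_and, Fin.ext_iff, Fin.val_one]
  omega

theorem isCoveringArray_two_two_iff {m n : ℕ} {C : Fin m → Fin n → Fin 2} :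
    IsCoveringArray m n 2 2 C ↔ Pairwise fun i j => ¬ colSupp C i ⊆ colSupp C j ∧
      (colSupp C i ∩ colSupp C j).Nonempty ∧ colSupp C i ∪ colSupp C j ≠ univ := by
  have h0 : ∀ r i, C r i = 0 ↔ r ∉ colSupp C i := by
    intro r i; rw [mem_colSupp_iff]; omega
  simp only [isCoveringArray_two_iff, Fin.forall_fin_two, h0, ← mem_colSupp_iff,
    not_subset, Finset.Nonempty, mem_inter, ne_eq, eq_univ_iff_forall, mem_union, not_forall,
    not_or]
  refine ⟨fun h i j hij => ⟨(h hij).2.1, (h hij).2.2, (h hij).1.1⟩, fun h i j hij => ?_⟩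
  obtain ⟨r, hrj, hri⟩ := (h hij.symm).1
  exact ⟨⟨(h hij).2.2, r, hri, hrj⟩, (h hij).1, (h hij).2.1⟩

def supportArray {m n : ℕ} (T : Fin n → Finset (Fin m)) : Fin m → Fin n → Fin 2 :=
  fun r i => if r ∈ T i then 1 else 0

theorem colSupp_supportArray {m n : ℕ} (T : Fin n → Finset (Fin m)) (i : Fin n) :
    colSupp (supportArray T) i = T i := by
  ext r
  by_cases hr : r ∈ T i <;> simp [mem_colSupp_iff, supportArray, hr]

theorem weight_increase_general (m n : ℕ) (C : Fin m → Fin n → Fin 2)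
    (hC : IsCoveringArray m n 2 2 C)
    (hwt : ∀ i : Fin n, colWt C i ≤ m / 2)
    (s' : ℕ) (hs2 : s' ≤ m / 2) :
    ∃ C' : Fin m → Fin n → Fin 2, IsCoveringArray m n 2 2 C' ∧
      ∀ i : Fin n, s' ≤ colWt C' i ∧ colWt C' i ≤ m / 2 ∧ colSupp C i ⊆ colSupp C' i := by
  have hsupp := isCoveringArray_two_two_iff.1 hC
  obtain ⟨T, hT, hST⟩ := exists_pairwise_not_subset_card_eq (h := m / 2)
    (by rw [Fintype.card_fin]; omega) (hsupp.mono fun _ _ h => h.1) hwt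
  have hwtT : ∀ i, colWt (supportArray T) i = m / 2 := fun i => by
    rw [colWt, ← colSupp, colSupp_supportArray, (hST i).2]
  refine ⟨supportArray T, isCoveringArray_two_two_iff.2 fun i j hij => ?_, fun i => ?_⟩
  · simp only [colSupp_supportArray]
    have hinter : (T i ∩ T j).Nonempty :=
      (hsupp hij).2.1.mono (inter_subset_inter (hST i).1 (hST j).1)
    exact ⟨hT hij, hinter, union_ne_univ_of_card_add_le hinter
      (by rw [(hST i).2, (hST j).2, Fintype.card_fin]; omega)⟩
  · rw [hwtT, colSupp_supportArray]
    exact ⟨hs2, le_rfl, (hST i).1⟩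

/-- columns of minimal weight of a binary 2-covering array can be enlarged:
if all columns have weight at most `⌊m/2⌋` and `s` is the minimal column weight, then for
any `s < s' ≤ ⌊m/2⌋` there is a binary 2-covering array of the same size and degree all of
whose column weights lie in `[s', ⌊m/2⌋]` with supports containing the original supports. -/
theorem weight_increase (m n : ℕ) (hm : 4 ≤ m) (C : Fin m → Fin n → Fin 2)
    (hC : IsCoveringArray m n 2 2 C)
    (hwt : ∀ i : Fin n, colWt C i ≤ m / 2)
    (s : ℕ) (hs : IsLeast (Set.range fun i : Fin n => colWt C i) s)
    (s' : ℕ) (hs1 : s < s') (hs2 : s' ≤ m / 2) :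
    ∃ C' : Fin m → Fin n → Fin 2, IsCoveringArray m n 2 2 C' ∧
      ∀ i : Fin n, s' ≤ colWt C' i ∧ colWt C' i ≤ m / 2 ∧ colSupp C i ⊆ colSupp C' i :=
  weight_increase_general m n C hC hwt s' hs2
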